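/- Let H = {z} ∪ {(x, k, y) : x, y ∈ Y ∪ Z, and there exist α, β ∈ Y and a path γ with x = αγ, y = βγ and k = l(α) − l(β)}, where z is an extra point. For α, β ∈ Y with r(α) = r(β), let A_{α,β} = {(αγ, l(α) − l(β), βγ) : γ a path, possibly of length 0, with s(γ) = r(α)} ⊆ H. Then H, equipped with the topology generated by the singleton {z}, the sets A_{α,β}, and their complements, is a Hausdorff topological space. -/

import Mathlib

namespace GraphCstar

/-- A directed graph: vertices, edges, source and range maps. -/
structure Graph where
  V : Type
  Ed : Type
  src : Ed → V
  rng : Ed → V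

variable (G : Graph)

/-- Validity of a list of edges as a path starting at vertex `v`. -/
def Valid : G.V → List G.Ed → Prop
  | _, [] => True
  | v, e :: l => G.src e = v ∧ Valid (G.rng e) l

/-- Terminal vertex of a list of edges starting at `v`. -/
def rngTo : G.V → List G.Ed → G.V
  | v, [] => v
  | _, e :: l => rngTo (G.rng e) l

theorem valid_append (l₁ l₂ : List G.Ed) (v : G.V) :
    Valid G v (l₁ ++ l₂) ↔ Valid G v l₁ ∧ Valid G (rngTo G v l₁) l₂ := by
  induction l₁ generalizing v with
  | nil => simp [Valid, rngTo]
  | cons e l ih => simp [Valid, rngTo, ih, and_assoc]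

theorem rngTo_append (l₁ l₂ : List G.Ed) (v : G.V) :
    rngTo G v (l₁ ++ l₂) = rngTo G (rngTo G v l₁) l₂ := by
  induction l₁ generalizing v with
  | nil => rfl
  | cons e l ih => simp [rngTo, ih]

theorem valid_drop {v : G.V} {l : List G.Ed} (n : ℕ) (h : Valid G v l) :
    Valid G (rngTo G v (l.take n)) (l.drop n) := by
  have h' : Valid G v (l.take n ++ l.drop n) := by
    rw [List.take_append_drop]; exact h
  exact ((valid_append G _ _ _).mp h').2

/-- A finite path in the graph `G`; vertices are the paths of length `0`. -/
structure FinPath where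
  start : G.V
  edges : List G.Ed
  valid : Valid G start edges

namespace FinPath

variable {G}

/-- The terminal vertex (range) of a finite path. -/
def rngF (α : FinPath G) : G.V := rngTo G α.start α.edges

/-- The length of a finite path. -/
def len (α : FinPath G) : ℕ := α.edges.length

/-- The finite path of length `0` at the vertex `v`. -/
def vp (v : G.V) : FinPath G := ⟨v, [], trivial⟩

/-- The finite path consisting of the single edge `e`. -/
def ep (e : G.Ed) : FinPath G := ⟨G.src e, [e], ⟨rfl, trivial⟩⟩

/-- Concatenation of finite paths. -/
def concat (α β : FinPath G) (h : β.start = α.rngF) : FinPath G :=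
  ⟨α.start, α.edges ++ β.edges,
    (valid_append G _ _ _).mpr
      ⟨α.valid, by
        show Valid G α.rngF β.edges
        rw [← h]; exact β.valid⟩⟩

theorem rngF_concat (α β : FinPath G) (h : β.start = α.rngF) :
    (α.concat β h).rngF = β.rngF := by
  show rngTo G α.start (α.edges ++ β.edges) = _
  rw [rngTo_append]
  show rngTo G α.rngF β.edges = _
  rw [← h]; rfl

end FinPath

/-- `α` is an initial segment of `β`. -/
def IsPref (α β : FinPath G) : Prop := α.start = β.start ∧ α.edges <+: β.edges

/-- The "remainder" path: if `α` is an initial segment of `β`, the path `μ` with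
`β = αμ` (for other inputs the value is junk). -/
def diff (α β : FinPath G) : FinPath G :=
  ⟨rngTo G β.start (β.edges.take α.edges.length),
    β.edges.drop α.edges.length, valid_drop G _ β.valid⟩

open Classical in
/-- Totalized concatenation of finite paths (junk value when endpoints do not match). -/
noncomputable def catP (α β : FinPath G) : FinPath G :=
  if h : β.start = α.rngF then α.concat β h else α

open Classical in
/-- The product on `T = {(α,β) ∈ Y × Y : r(α) = r(β)} ∪ {z}`, with `z` encoded as `none`. -/
noncomputable def mulT :
    Option (FinPath G × FinPath G) → Option (FinPath G × FinPath G) →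
      Option (FinPath G × FinPath G)
  | none, _ => none
  | _, none => none
  | some (α₁, β₁), some (α₂, β₂) =>
    if IsPref G β₁ α₂ then some (catP G α₁ (diff G β₁ α₂), β₂)
    else if IsPref G α₂ β₁ then some (α₁, catP G β₂ (diff G α₂ β₁))
    else none

/-- The involution on `T`. -/
def starT :
    Option (FinPath G × FinPath G) → Option (FinPath G × FinPath G)
  | none => none
  | some (α, β) => some (β, α)

/-- The subset of `Option (FinPath G × FinPath G)` corresponding to
`T = {(α,β) : r(α) = r(β)} ∪ {z}`. -/
def TsetT : Set (Option (FinPath G × FinPath G)) :=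
  {t | ∀ α β : FinPath G, t = some (α, β) → α.rngF = β.rngF}

/-- An infinite path in the graph `G`. -/
structure InfPath where
  seq : ℕ → G.Ed
  valid : ∀ i, G.src (seq (i + 1)) = G.rng (seq i)

/-- The initial vertex of an infinite path. -/
def InfPath.start {G : Graph} (z : InfPath G) : G.V := G.src (z.seq 0)

/-- Prepending an edge to an infinite path. -/
def consInf (e : G.Ed) (z : InfPath G) (h : z.start = G.rng e) : InfPath G where
  seq := fun n =>
    match n with
    | 0 => e
    | m + 1 => z.seq m
  valid := fun i =>
    match i with
    | 0 => h
    | m + 1 => z.valid m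

/-- Prepending a finite edge list to an infinite path (with the starting vertex recorded). -/
def appendInfAux :
    (l : List G.Ed) → (v : G.V) → Valid G v l → (z : InfPath G) →
      z.start = rngTo G v l → {w : InfPath G // w.start = v}
  | [], _, _, z, h => ⟨z, h⟩
  | e :: l, v, hv, z, h =>
    let w := appendInfAux l (G.rng e) hv.2 z h
    ⟨consInf G e w.1 w.2, hv.1⟩

/-- Concatenation of a finite path with an infinite path. -/
def FinPath.concatInf {G : Graph} (α : FinPath G) (z : InfPath G)
    (h : z.start = α.rngF) : InfPath G :=
  (appendInfAux G α.edges α.start α.valid z h).1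

/-- The path space `Y ∪ Z` of all finite and infinite paths. -/
def PathSp := FinPath G ⊕ InfPath G

/-- The initial vertex of a (finite or infinite) path. -/
def startOf : PathSp G → G.V
  | .inl α => α.start
  | .inr z => z.start

/-- The length of a path, in `ℕ∞`. -/
def lenOf : PathSp G → ℕ∞
  | .inl α => (α.edges.length : ℕ∞)
  | .inr _ => ⊤

/-- The `i`-th edge (0-indexed) of a path, if it exists. -/
def nthEdge : PathSp G → ℕ → Option G.Ed
  | .inl α, i => α.edges[i]?
  | .inr z, i => some (z.seq i)

/-- `x = αγ` for some (finite or infinite, possibly length `0`) path `γ`;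
that is, `α` is an initial segment of `x`, i.e. `x ∈ D_α`. -/
def Ext (α : FinPath G) (x : PathSp G) : Prop :=
  (∃ (β : FinPath G) (h : β.start = α.rngF), x = .inl (α.concat β h)) ∨
  (∃ (w : InfPath G) (h : w.start = α.rngF), x = .inr (α.concatInf w h))

/-- The basic set `D_α ⊆ Y ∪ Z`. -/
def Dset (α : FinPath G) : Set (PathSp G) := {x | Ext G α x}

/-- The topology on the path space, generated by the sets `D_α` and their complements. -/
def pathTop : TopologicalSpace (PathSp G) :=
  .generateFrom (Set.range (Dset G) ∪ Set.range fun α => (Dset G α)ᶜ)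

/-- The vertex `v` emits infinitely many edges. -/
def Vinf (v : G.V) : Prop := {e | G.src e = v}.Infinite

/-- Membership in `X = Y_∞ ∪ Z`. -/
def memX : PathSp G → Prop
  | .inl α => Vinf G α.rngF
  | .inr _ => True

/-- The set `X = Y_∞ ∪ Z`. -/
def Xset : Set (PathSp G) := {x | memX G x}

/-- Tail equivalence of paths: `x = αγ` and `y = βγ` for finite paths `α, β`
and a common (finite or infinite) path `γ`. -/
def TailEq (x y : PathSp G) : Prop :=
  (∃ (α β γ : FinPath G) (h₁ : γ.start = α.rngF) (h₂ : γ.start = β.rngF),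
      x = .inl (α.concat γ h₁) ∧ y = .inl (β.concat γ h₂)) ∨
  (∃ (α β : FinPath G) (w : InfPath G) (h₁ : w.start = α.rngF)
      (h₂ : w.start = β.rngF),
      x = .inr (α.concatInf w h₁) ∧ y = .inr (β.concatInf w h₂))

/-- A subset of the path space is invariant (a union of tail-equivalence classes). -/
def InvariantS (F : Set (PathSp G)) : Prop :=
  ∀ x ∈ F, ∀ y, TailEq G x y → y ∈ F

/-- Membership `(x, k, y) ∈ G` for the path groupoid: `x = αγ`, `y = βγ` and
`k = l(α) - l(β)`. -/
def InG (x : PathSp G) (k : ℤ) (y : PathSp G) : Prop :=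
  (∃ (α β γ : FinPath G) (h₁ : γ.start = α.rngF) (h₂ : γ.start = β.rngF),
      x = .inl (α.concat γ h₁) ∧ y = .inl (β.concat γ h₂) ∧
        k = (α.len : ℤ) - (β.len : ℤ)) ∨
  (∃ (α β : FinPath G) (w : InfPath G) (h₁ : w.start = α.rngF)
      (h₂ : w.start = β.rngF),
      x = .inr (α.concatInf w h₁) ∧ y = .inr (β.concatInf w h₂) ∧
        k = (α.len : ℤ) - (β.len : ℤ))

/-- There is a finite path from `u` to `w`. -/
def Reach (u w : G.V) : Prop := ∃ β : FinPath G, β.start = u ∧ β.rngF = w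

/-- A loop based at the vertex `v`. -/
def LoopAt (v : G.V) (α : FinPath G) : Prop :=
  α.edges ≠ [] ∧ α.start = v ∧ α.rngF = v ∧
    ∀ i e, i + 1 < α.edges.length → α.edges[i]? = some e → G.rng e ≠ v

/-- Condition (K): no vertex has exactly one loop based at it. -/
def CondK : Prop := ¬ ∃ v : G.V, ∃! α : FinPath G, LoopAt G v α

/-- A point of the path space has trivial isotropy if whenever `x = αγ = βγ`
then `l(α) = l(β)`. -/
def TrivIso (x : PathSp G) : Prop :=
  ∀ α β : FinPath G,
    ((∃ (γ : FinPath G) (h₁ : γ.start = α.rngF) (h₂ : γ.start = β.rngF),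
        x = .inl (α.concat γ h₁) ∧ x = .inl (β.concat γ h₂)) ∨
     (∃ (w : InfPath G) (h₁ : w.start = α.rngF) (h₂ : w.start = β.rngF),
        x = .inr (α.concatInf w h₁) ∧ x = .inr (β.concatInf w h₂))) →
    α.len = β.len


/-- The universal groupoid `H = {z} ∪ {(x,k,y) : x = αγ, y = βγ, k = l(α) − l(β)}`,
with `z` encoded as `none`. -/
def HType := Option {p : PathSp G × ℤ × PathSp G // InG G p.1 p.2.1 p.2.2}

/-- The basic set `A_{α,β} = {(αγ, l(α) − l(β), βγ)} ⊆ H`. -/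
def ASet (α β : FinPath G) : Set (HType G) :=
  {t | ∃ (p : PathSp G × ℤ × PathSp G) (h : InG G p.1 p.2.1 p.2.2),
    t = some ⟨p, h⟩ ∧ p.2.1 = (α.len : ℤ) - (β.len : ℤ) ∧
    ((∃ (γ : FinPath G) (h₁ : γ.start = α.rngF) (h₂ : γ.start = β.rngF),
        p.1 = .inl (α.concat γ h₁) ∧ p.2.2 = .inl (β.concat γ h₂)) ∨
     (∃ (w : InfPath G) (h₁ : w.start = α.rngF) (h₂ : w.start = β.rngF),
        p.1 = .inr (α.concatInf w h₁) ∧ p.2.2 = .inr (β.concatInf w h₂)))}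

/-- The topology on `H` generated by the singleton `{z}`, the sets `A_{α,β}`
(for `α, β ∈ Y` with `r(α) = r(β)`), and their complements. -/
def HTop : TopologicalSpace (HType G) :=
  .generateFrom ({{(none : HType G)}} ∪
    {S | ∃ α β : FinPath G, α.rngF = β.rngF ∧ (S = ASet G α β ∨ S = (ASet G α β)ᶜ)})

/-!
Every point `(αu, l(α) - l(β), βu)` of `H ∖ {z}` lies in `A_{α,β}`, so `{z}` is clopen as well as
every generating set, and it suffices to separate two distinct points by a single `A_{α,β}`. If
`(αu, k, βu) ≠ (αu', k, βu')` both lie in `A_{α,β}`, then `u ≠ u'`, so some finite path `δ` is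
an initial segment of exactly one of `u`, `u'`; then `A_{αδ,βδ}` contains exactly one of the two
points.
-/

section

variable {G}

namespace FinPath

theorem ext {α β : FinPath G} (hs : α.start = β.start) (he : α.edges = β.edges) : α = β := by
  cases α; cases β; cases hs; cases he; rfl

theorem len_concat (α β : FinPath G) (h : β.start = α.rngF) :
    (α.concat β h).len = α.len + β.len :=
  List.length_append

theorem concat_vp (α : FinPath G) : α.concat (vp α.rngF) rfl = α :=
  ext rfl (List.append_nil _)

theorem concat_assoc (α β γ : FinPath G) (hβ : β.start = α.rngF)
    (hγ : γ.start = (α.concat β hβ).rngF) :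
    (α.concat β hβ).concat γ hγ =
      α.concat (β.concat γ (hγ.trans (rngF_concat α β hβ))) hβ :=
  ext rfl (List.append_assoc _ _ _)

theorem concat_inj {α γ γ' : FinPath G} {h : γ.start = α.rngF} {h' : γ'.start = α.rngF}
    (he : α.concat γ h = α.concat γ' h') : γ = γ' :=
  ext (h.trans h'.symm) (List.append_cancel_left (congrArg edges he))

end FinPath

theorem appendInfAux_seq_length_add (l : List G.Ed) (v : G.V) (hv : Valid G v l)
    (z : InfPath G) (h : z.start = rngTo G v l) (n : ℕ) :
    (appendInfAux G l v hv z h).1.seq (l.length + n) = z.seq n := by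
  induction l generalizing v with
  | nil => simp [appendInfAux]
  | cons e l ih =>
    rw [List.length_cons, Nat.add_right_comm]
    exact ih (G.rng e) hv.2 h

theorem appendInfAux_seq_of_lt (l : List G.Ed) (v : G.V) (hv : Valid G v l)
    (z : InfPath G) (h : z.start = rngTo G v l) {n : ℕ} (hn : n < l.length) :
    (appendInfAux G l v hv z h).1.seq n = l[n] := by
  induction l generalizing v n with
  | nil => simp at hn
  | cons e l ih =>
    cases n with
    | zero => rfl
    | succ n => exact ih (G.rng e) hv.2 h (Nat.lt_of_succ_lt_succ hn)

theorem appendInfAux_append (l₁ l₂ : List G.Ed) (v : G.V) (hv : Valid G v (l₁ ++ l₂))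
    (z : InfPath G) (h : z.start = rngTo G v (l₁ ++ l₂)) :
    (appendInfAux G (l₁ ++ l₂) v hv z h).1 =
      (appendInfAux G l₁ v ((valid_append G l₁ l₂ v).mp hv).1
        (appendInfAux G l₂ _ ((valid_append G l₁ l₂ v).mp hv).2 z
          (h.trans (rngTo_append G l₁ l₂ v))).1
        (appendInfAux G l₂ _ _ z _).2).1 := by
  induction l₁ generalizing v with
  | nil => rfl
  | cons e l ih =>
    simp only [List.cons_append, appendInfAux]
    congr 1
    exact ih (G.rng e) hv.2 h

namespace InfPath

theorem ext {w w' : InfPath G} (h : ∀ n, w.seq n = w'.seq n) : w = w' := by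
  cases w; cases w'; cases funext h; rfl

def drop (w : InfPath G) (n : ℕ) : InfPath G :=
  ⟨fun i => w.seq (n + i), fun i => w.valid (n + i)⟩

theorem rngTo_map_range (w : InfPath G) (n : ℕ) :
    rngTo G w.start ((List.range n).map w.seq) = (w.drop n).start := by
  induction n with
  | zero => rfl
  | succ n ih =>
    rw [List.range_succ, List.map_append, rngTo_append, ih]
    exact (w.valid n).symm

theorem valid_map_range (w : InfPath G) (n : ℕ) :
    Valid G w.start ((List.range n).map w.seq) := by
  induction n with
  | zero => trivial
  | succ n ih =>
    rw [List.range_succ, List.map_append, valid_append, rngTo_map_range]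
    exact ⟨ih, rfl, trivial⟩

def take (w : InfPath G) (n : ℕ) : FinPath G :=
  ⟨w.start, (List.range n).map w.seq, valid_map_range w n⟩

theorem len_take (w : InfPath G) (n : ℕ) : (w.take n).len = n := by
  simp [take, FinPath.len]

theorem rngF_take (w : InfPath G) (n : ℕ) : (w.take n).rngF = (w.drop n).start :=
  rngTo_map_range w n

end InfPath

namespace FinPath

theorem concatInf_start (α : FinPath G) (w : InfPath G) (h : w.start = α.rngF) :
    (α.concatInf w h).start = α.start :=
  (appendInfAux G α.edges α.start α.valid w h).2

theorem concatInf_seq_len_add (α : FinPath G) (w : InfPath G) (h : w.start = α.rngF)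
    (n : ℕ) : (α.concatInf w h).seq (α.len + n) = w.seq n :=
  appendInfAux_seq_length_add _ _ _ _ _ n

theorem concatInf_seq_of_lt (α : FinPath G) (w : InfPath G) (h : w.start = α.rngF)
    {n : ℕ} (hn : n < α.len) : (α.concatInf w h).seq n = α.edges[n] :=
  appendInfAux_seq_of_lt _ _ _ _ _ hn

theorem concatInf_inj {α : FinPath G} {w w' : InfPath G} {h : w.start = α.rngF}
    {h' : w'.start = α.rngF} (he : α.concatInf w h = α.concatInf w' h') : w = w' :=
  InfPath.ext fun n => by
    rw [← concatInf_seq_len_add α w h, ← concatInf_seq_len_add α w' h', he]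

theorem concat_concatInf (α β : FinPath G) (hβ : β.start = α.rngF) (w : InfPath G)
    (hw : w.start = (α.concat β hβ).rngF) :
    (α.concat β hβ).concatInf w hw =
      α.concatInf (β.concatInf w (hw.trans (rngF_concat α β hβ)))
        ((concatInf_start β w _).trans hβ) := by
  rcases β with ⟨s, l, hl⟩
  change s = α.rngF at hβ
  subst hβ
  exact appendInfAux_append α.edges l α.start _ w hw

end FinPath

theorem InfPath.take_concatInf_drop (w : InfPath G) (n : ℕ) :
    (w.take n).concatInf (w.drop n) (w.rngF_take n).symm = w := by
  refine InfPath.ext fun i => ?_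
  rcases lt_or_ge i n with hi | hi
  · rw [FinPath.concatInf_seq_of_lt _ _ _ (by rwa [w.len_take])]
    simp [InfPath.take]
  · obtain ⟨m, rfl⟩ := Nat.exists_eq_add_of_le hi
    have h := FinPath.concatInf_seq_len_add (w.take n) (w.drop n) (w.rngF_take n).symm m
    rw [w.len_take] at h
    exact h

namespace FinPath

/-- The concatenation `αu` of the paper, for `u ∈ Y ∪ Z`. -/
def catSp (α : FinPath G) : (u : PathSp G) → startOf G u = α.rngF → PathSp G
  | .inl γ, h => .inl (α.concat γ h)
  | .inr w, h => .inr (α.concatInf w h)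

theorem startOf_catSp (α : FinPath G) (u : PathSp G) (h : startOf G u = α.rngF) :
    startOf G (α.catSp u h) = α.start := by
  cases u with
  | inl γ => rfl
  | inr w => exact concatInf_start α w h

theorem concat_catSp (α δ : FinPath G) (hδ : δ.start = α.rngF) (u : PathSp G)
    (hu : startOf G u = (α.concat δ hδ).rngF) :
    (α.concat δ hδ).catSp u hu =
      α.catSp (δ.catSp u (hu.trans (rngF_concat α δ hδ)))
        ((startOf_catSp δ u _).trans hδ) := by
  cases u with
  | inl γ => exact congrArg Sum.inl (concat_assoc α δ γ hδ hu)
  | inr w => exact congrArg Sum.inr (concat_concatInf α δ hδ w hu)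

theorem catSp_inj {α : FinPath G} {u u' : PathSp G} {h : startOf G u = α.rngF}
    {h' : startOf G u' = α.rngF} : α.catSp u h = α.catSp u' h' ↔ u = u' := by
  refine ⟨fun he => ?_, fun he => by subst he; rfl⟩
  cases u <;> cases u'
  · exact congrArg Sum.inl (concat_inj (Sum.inl.inj he))
  · exact absurd he Sum.inl_ne_inr
  · exact absurd he Sum.inr_ne_inl
  · exact congrArg Sum.inr (concatInf_inj (Sum.inr.inj he))

end FinPath

theorem ext_iff_exists_catSp {α : FinPath G} {x : PathSp G} :
    Ext G α x ↔ ∃ u h, x = α.catSp u h := by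
  constructor
  · rintro (⟨γ, h, rfl⟩ | ⟨w, h, rfl⟩)
    exacts [⟨.inl γ, h, rfl⟩, ⟨.inr w, h, rfl⟩]
  · rintro ⟨(γ | w), h, rfl⟩
    exacts [Or.inl ⟨γ, h, rfl⟩, Or.inr ⟨w, h, rfl⟩]

theorem start_eq_of_ext {δ : FinPath G} {x : PathSp G} (hx : Ext G δ x) :
    δ.start = startOf G x := by
  obtain ⟨u, h, rfl⟩ := ext_iff_exists_catSp.mp hx
  exact (FinPath.startOf_catSp δ u h).symm

theorem ext_inl_self (μ : FinPath G) : Ext G μ (.inl μ) :=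
  Or.inl ⟨FinPath.vp μ.rngF, rfl, by rw [FinPath.concat_vp]⟩

theorem not_ext_inl_of_len_lt {δ μ : FinPath G} (hlt : μ.len < δ.len) :
    ¬ Ext G δ (.inl μ) := by
  rintro (⟨γ, h, he⟩ | ⟨w, h, he⟩)
  · have := congrArg FinPath.len (Sum.inl.inj he)
    rw [FinPath.len_concat] at this
    omega
  · exact Sum.inl_ne_inr he

theorem ext_take (w : InfPath G) (n : ℕ) : Ext G (w.take n) (.inr w) :=
  Or.inr ⟨w.drop n, (w.rngF_take n).symm, by rw [w.take_concatInf_drop]⟩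

theorem InfPath.seq_eq_of_ext_take {w w' : InfPath G} {n : ℕ}
    (hw' : Ext G (w.take n) (.inr w')) {i : ℕ} (hi : i < n) : w'.seq i = w.seq i := by
  rcases hw' with ⟨γ, h, he⟩ | ⟨v, h, he⟩
  · exact absurd he Sum.inr_ne_inl
  · rw [Sum.inr.inj he, FinPath.concatInf_seq_of_lt _ _ _ (by rwa [w.len_take])]
    simp [InfPath.take]

theorem exists_ext_iff_not_ext {u u' : PathSp G} (hne : u ≠ u') :
    ∃ δ : FinPath G, (Ext G δ u ↔ ¬ Ext G δ u') := by
  rcases u with μ | w <;> rcases u' with μ' | w'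
  · by_cases hμ : Ext G μ (.inl μ')
    · obtain ⟨γ, h, he⟩ | ⟨_, _, he⟩ := hμ
      · replace he : μ' = μ.concat γ h := Sum.inl.inj he
        have hγ : γ.edges ≠ [] := fun hγ => hne <| congrArg Sum.inl <| by
          refine he ▸ FinPath.ext rfl ?_
          show μ.edges = μ.edges ++ γ.edges
          rw [hγ, List.append_nil]
        have hlen : μ.len < μ'.len := by
          rw [he, FinPath.len_concat]
          exact Nat.lt_add_of_pos_right (List.length_pos_iff.mpr hγ)
        exact ⟨μ', iff_of_false (not_ext_inl_of_len_lt hlen) (not_not_intro (ext_inl_self μ'))⟩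
      · exact absurd he Sum.inl_ne_inr
    · exact ⟨μ, iff_of_true (ext_inl_self μ) hμ⟩
  · refine ⟨w'.take (μ.len + 1), iff_of_false ?_ (not_not_intro (ext_take w' _))⟩
    exact not_ext_inl_of_len_lt (by rw [InfPath.len_take]; omega)
  · refine ⟨w.take (μ'.len + 1), iff_of_true (ext_take w _) ?_⟩
    exact not_ext_inl_of_len_lt (by rw [InfPath.len_take]; omega)
  · obtain ⟨n, hn⟩ : ∃ n, w.seq n ≠ w'.seq n := by
      by_contra! h
      exact hne (congrArg Sum.inr (InfPath.ext h))
    exact ⟨w.take (n + 1), iff_of_true (ext_take w _)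
      fun h => hn (InfPath.seq_eq_of_ext_take h n.lt_succ_self).symm⟩

theorem exists_catSp_of_inG {p : PathSp G × ℤ × PathSp G} (hp : InG G p.1 p.2.1 p.2.2) :
    ∃ (α β : FinPath G) (u : PathSp G) (h₁ : startOf G u = α.rngF)
      (h₂ : startOf G u = β.rngF), p = (α.catSp u h₁, (α.len : ℤ) - β.len, β.catSp u h₂) := by
  obtain ⟨x, k, y⟩ := p
  rcases hp with ⟨α, β, γ, h₁, h₂, rfl, rfl, rfl⟩ | ⟨α, β, w, h₁, h₂, rfl, rfl, rfl⟩
  exacts [⟨α, β, .inl γ, h₁, h₂, rfl⟩, ⟨α, β, .inr w, h₁, h₂, rfl⟩]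

theorem mem_ASet_iff {α β : FinPath G} {p : PathSp G × ℤ × PathSp G}
    {hp : InG G p.1 p.2.1 p.2.2} :
    (some ⟨p, hp⟩ : HType G) ∈ ASet G α β ↔ p.2.1 = (α.len : ℤ) - β.len ∧
      ∃ u h₁ h₂, p.1 = α.catSp u h₁ ∧ p.2.2 = β.catSp u h₂ := by
  constructor
  · rintro ⟨p', hp', he, hk, hd⟩
    obtain rfl : p = p' := congrArg Subtype.val (Option.some.inj he)
    refine ⟨hk, ?_⟩
    rcases hd with ⟨γ, h₁, h₂, hx, hy⟩ | ⟨w, h₁, h₂, hx, hy⟩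
    exacts [⟨.inl γ, h₁, h₂, hx, hy⟩, ⟨.inr w, h₁, h₂, hx, hy⟩]
  · rintro ⟨hk, γ | w, h₁, h₂, hx, hy⟩
    exacts [⟨p, hp, rfl, hk, Or.inl ⟨γ, h₁, h₂, hx, hy⟩⟩,
      ⟨p, hp, rfl, hk, Or.inr ⟨w, h₁, h₂, hx, hy⟩⟩]

theorem mem_ASet_concat_iff {α β δ : FinPath G} (hα : δ.start = α.rngF)
    (hβ : δ.start = β.rngF) {u : PathSp G} (h₁ : startOf G u = α.rngF)
    (h₂ : startOf G u = β.rngF)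
    (hp : InG G (α.catSp u h₁) ((α.len : ℤ) - β.len) (β.catSp u h₂)) :
    (some ⟨(α.catSp u h₁, (α.len : ℤ) - β.len, β.catSp u h₂), hp⟩ : HType G) ∈
      ASet G (α.concat δ hα) (β.concat δ hβ) ↔ Ext G δ u := by
  rw [mem_ASet_iff, ext_iff_exists_catSp]
  constructor
  · rintro ⟨-, t, g, -, hx, -⟩
    rw [FinPath.concat_catSp, FinPath.catSp_inj] at hx
    exact ⟨t, _, hx⟩
  · rintro ⟨t, g, rfl⟩
    refine ⟨?_, t, g.trans (FinPath.rngF_concat α δ hα).symm,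
      g.trans (FinPath.rngF_concat β δ hβ).symm, ?_, ?_⟩
    · rw [FinPath.len_concat, FinPath.len_concat]
      push_cast
      ring
    · rw [FinPath.concat_catSp]
    · rw [FinPath.concat_catSp]

theorem exists_ASet_mem_iff_not_mem {p q : PathSp G × ℤ × PathSp G}
    (hp : InG G p.1 p.2.1 p.2.2) (hq : InG G q.1 q.2.1 q.2.2) (hne : p ≠ q) :
    ∃ α β : FinPath G, α.rngF = β.rngF ∧
      ((some ⟨p, hp⟩ : HType G) ∈ ASet G α β ↔ (some ⟨q, hq⟩ : HType G) ∉ ASet G α β) := by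
  obtain ⟨α, β, u, h₁, h₂, rfl⟩ := exists_catSp_of_inG hp
  by_cases hqA : (some ⟨q, hq⟩ : HType G) ∈ ASet G α β
  · obtain ⟨hk, u', h₁', h₂', hx, hy⟩ := mem_ASet_iff.mp hqA
    obtain rfl : q = (α.catSp u' h₁', (α.len : ℤ) - β.len, β.catSp u' h₂') :=
      Prod.ext hx (Prod.ext hk hy)
    have hu : u ≠ u' := by
      rintro rfl
      exact hne rfl
    obtain ⟨δ, hδ⟩ := exists_ext_iff_not_ext hu
    have hδu : δ.start = startOf G u := by
      by_cases h : Ext G δ u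
      · exact start_eq_of_ext h
      · exact (start_eq_of_ext (not_not.mp (mt hδ.mpr h))).trans (h₁'.trans h₁.symm)
    refine ⟨α.concat δ (hδu.trans h₁), β.concat δ (hδu.trans h₂), ?_, ?_⟩
    · rw [FinPath.rngF_concat, FinPath.rngF_concat]
    · rwa [mem_ASet_concat_iff, mem_ASet_concat_iff]
  · exact ⟨α, β, h₁.symm.trans h₂,
      iff_of_true (mem_ASet_iff.mpr ⟨rfl, u, h₁, h₂, rfl, rfl⟩) hqA⟩

theorem compl_singleton_none :
    ({none}ᶜ : Set (HType G)) = ⋃ (α : FinPath G) (β : FinPath G) (_ : α.rngF = β.rngF),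
      ASet G α β := by
  refine Set.Subset.antisymm (fun t ht => ?_) <| Set.iUnion_subset fun α =>
    Set.iUnion_subset fun β => Set.iUnion_subset fun _ t ⟨_, _, he, _⟩ => ?_
  · match t, ht with
    | some ⟨p, hp⟩, _ =>
      obtain ⟨α, β, u, h₁, h₂, rfl⟩ := exists_catSp_of_inG hp
      exact Set.mem_iUnion₂_of_mem (i := α) (j := β) <| Set.mem_iUnion_of_mem (h₁.symm.trans h₂) <|
        mem_ASet_iff.mpr ⟨rfl, u, h₁, h₂, rfl, rfl⟩
  · exact he ▸ Option.some_ne_none _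

section

attribute [local instance] HTop

theorem isClopen_ASet {α β : FinPath G} (h : α.rngF = β.rngF) : IsClopen (ASet G α β) :=
  ⟨isOpen_compl_iff.mp <|
      TopologicalSpace.isOpen_generateFrom_of_mem (Or.inr ⟨α, β, h, Or.inr rfl⟩),
    TopologicalSpace.isOpen_generateFrom_of_mem (Or.inr ⟨α, β, h, Or.inl rfl⟩)⟩

theorem isClopen_singleton_none : IsClopen ({none} : Set (HType G)) := by
  refine ⟨isOpen_compl_iff.mp ?_, TopologicalSpace.isOpen_generateFrom_of_mem (Or.inl rfl)⟩
  rw [compl_singleton_none]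
  exact isOpen_iUnion fun α => isOpen_iUnion fun β => isOpen_iUnion fun h => (isClopen_ASet h).2

theorem totallySeparatedSpace_HType : TotallySeparatedSpace (HType G) := by
  refine totallySeparatedSpace_iff_exists_isClopen.mpr fun a b hab => ?_
  match a, b with
  | none, none => exact absurd rfl hab
  | none, some _ => exact ⟨{none}, isClopen_singleton_none, rfl, Option.some_ne_none _⟩
  | some _, none =>
    exact ⟨{none}ᶜ, isClopen_singleton_none.compl, Option.some_ne_none _, not_not_intro rfl⟩
  | some ⟨p, hp⟩, some ⟨q, hq⟩ =>
    have hpq : p ≠ q := fun h => hab (by subst h; rfl)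
    obtain ⟨α, β, hr, hiff⟩ := exists_ASet_mem_iff_not_mem hp hq hpq
    by_cases ha : (some ⟨p, hp⟩ : HType G) ∈ ASet G α β
    · exact ⟨ASet G α β, isClopen_ASet hr, ha, hiff.mp ha⟩
    · exact ⟨(ASet G α β)ᶜ, (isClopen_ASet hr).compl, ha, mt hiff.mpr ha⟩

end

end

theorem HType_t2_general (G : Graph) :
    @T2Space (HType G) (HTop G) :=
  @TotallySeparatedSpace.t2Space _ (HTop G) totallySeparatedSpace_HType

/-- The space `H`, equipped with the topology generated by `{z}`,
the sets `A_{α,β}`, and their complements, is Hausdorff. -/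
theorem HType_t2 (G : Graph) [Countable G.V] [Countable G.Ed] :
    @T2Space (HType G) (HTop G) :=
  HType_t2_general G

end GraphCstar
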